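/- Noisy randomized Kaczmarz theorem: Let A be an m × n real matrix with full column rank and nonzero rows a₁, …, a_m, and suppose Ax = b. Let r ∈ ℝᵐ be an arbitrary noise vector. Define the noisy randomized Kaczmarz iterates by x*_{k} = x*_{k-1} + ((b_{i_k} + r_{i_k} - ⟨a_{i_k}, x*_{k-1}⟩)/‖a_{i_k}‖²) a_{i_k}, where the indices i_k are chosen independently with ℙ(i_k = i) = ‖a_i‖²/‖A‖_F². Then 𝔼‖x*_k - x‖ ≤ (1 - 1/R)^{k/2} ‖x₀ - x‖ + √R · γ, where R = ‖A⁻¹‖² ‖A‖_F² and γ = max_i |r_i|/‖a_i‖. -/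

import Mathlib

open Finset

/-- Euclidean norm on `Fin k → ℝ`. -/
noncomputable def euclNorm {k : ℕ} (v : Fin k → ℝ) : ℝ := Real.sqrt (∑ j, v j ^ 2)

/-- Standard inner product on `Fin k → ℝ`. -/
noncomputable def ip {k : ℕ} (v w : Fin k → ℝ) : ℝ := ∑ j, v j * w j

/-- Frobenius norm of a matrix. -/
noncomputable def frob {m n : ℕ} (A : Matrix (Fin m) (Fin n) ℝ) : ℝ :=
  Real.sqrt (∑ i, ∑ j, A i j ^ 2)

/-- `‖A⁻¹‖ = inf {M : M‖Az‖ ≥ ‖z‖ for all z}`. -/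
noncomputable def invNorm {m n : ℕ} (A : Matrix (Fin m) (Fin n) ℝ) : ℝ :=
  sInf {M : ℝ | ∀ z : Fin n → ℝ, euclNorm z ≤ M * euclNorm (A.mulVec z)}

/-- Kaczmarz iteration driven by a list of row indices (head = last step):
each step orthogonally projects onto the hyperplane `{z : ⟨a_i, z⟩ = c i}`. -/
noncomputable def kIter {m n : ℕ} (A : Matrix (Fin m) (Fin n) ℝ) (c : Fin m → ℝ)
    (x0 : Fin n → ℝ) : List (Fin m) → (Fin n → ℝ)
  | [] => x0
  | i :: l => kIter A c x0 l + ((c i - ip (A i) (kIter A c x0 l)) / euclNorm (A i) ^ 2) • A i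

/-! A noisy Kaczmarz step is the orthogonal projection onto the hyperplane
`⟪a_i, y⟫ = b_i + r_i`, which lies at distance `|r_i| / ‖a_i‖` from `x`, so by Pythagoras
`‖x_k - x‖² = ‖x_{k-1} - x‖² - ⟪a_i, x_{k-1} - x⟫² / ‖a_i‖² + r_i² / ‖a_i‖²`.
Averaging with the weights `‖a_i‖² / ‖A‖_F²` turns the middle term into
`‖A (x_{k-1} - x)‖² / ‖A‖_F² ≥ ‖x_{k-1} - x‖² / R`, and the last into at most `γ²`.
Iterating, `𝔼‖x_k - x‖² ≤ (1 - 1/R)^k ‖x₀ - x‖² + R γ²`, since `(1 - 1/R) R γ² + γ² = R γ²`;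
then `𝔼 e ≤ √(𝔼 e²)` and `√(s + t) ≤ √s + √t`. -/

section Euclidean

variable {k : ℕ}

lemma euclNorm_nonneg (v : Fin k → ℝ) : 0 ≤ euclNorm v := Real.sqrt_nonneg _

lemma euclNorm_sq (v : Fin k → ℝ) : euclNorm v ^ 2 = ∑ j, v j ^ 2 :=
  Real.sq_sqrt (sum_nonneg fun _ _ => sq_nonneg _)

lemma euclNorm_eq_norm (v : Fin k → ℝ) : euclNorm v = ‖WithLp.toLp 2 v‖ := by
  simp [EuclideanSpace.norm_eq, euclNorm]

lemma euclNorm_pos {v : Fin k → ℝ} (hv : v ≠ 0) : 0 < euclNorm v := by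
  rw [euclNorm_eq_norm]
  simpa using hv

lemma euclNorm_single (i : Fin k) : euclNorm (Pi.single i 1) = 1 := by
  simp [euclNorm, Pi.single_apply]

lemma euclNorm_of_fin_zero (v : Fin 0 → ℝ) : euclNorm v = 0 := by
  simp [euclNorm]

lemma ip_sub (v z x : Fin k → ℝ) : ip v (z - x) = ip v z - ip v x := by
  simp [ip, mul_sub, sum_sub_distrib]

lemma ip_sq_le (v w : Fin k → ℝ) : ip v w ^ 2 ≤ euclNorm v ^ 2 * euclNorm w ^ 2 := by
  simpa only [euclNorm_sq, ip] using sum_mul_sq_le_sq_mul_sq univ v w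

lemma euclNorm_add_smul_sq (u w : Fin k → ℝ) (t : ℝ) :
    euclNorm (u + t • w) ^ 2 = euclNorm u ^ 2 + 2 * t * ip w u + t ^ 2 * euclNorm w ^ 2 := by
  simp only [euclNorm_sq, ip, mul_sum, ← sum_add_distrib]
  refine sum_congr rfl fun j _ => ?_
  simp only [Pi.add_apply, Pi.smul_apply, smul_eq_mul]
  ring

lemma euclNorm_add_proj_sub_sq (w z x : Fin k → ℝ) (ρ : ℝ) :
    euclNorm (z + ((ip w x + ρ - ip w z) / euclNorm w ^ 2) • w - x) ^ 2
      = euclNorm (z - x) ^ 2 + (ρ ^ 2 - ip w (z - x) ^ 2) / euclNorm w ^ 2 := by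
  rw [show z + ((ip w x + ρ - ip w z) / euclNorm w ^ 2) • w - x
      = (z - x) + ((ρ - ip w (z - x)) / euclNorm w ^ 2) • w by rw [ip_sub]; abel_nf,
    euclNorm_add_smul_sq]
  field_simp
  ring

end Euclidean

section Matrix

variable {m n : ℕ} (A : Matrix (Fin m) (Fin n) ℝ)

lemma frob_sq : frob A ^ 2 = ∑ i, euclNorm (A i) ^ 2 := by
  rw [frob, Real.sq_sqrt (by positivity)]
  exact sum_congr rfl fun i _ => (euclNorm_sq (A i)).symm

lemma euclNorm_mulVec_sq (z : Fin n → ℝ) : euclNorm (A.mulVec z) ^ 2 = ∑ i, ip (A i) z ^ 2 :=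
  euclNorm_sq _

lemma euclNorm_mulVec_le (z : Fin n → ℝ) : euclNorm (A.mulVec z) ≤ frob A * euclNorm z := by
  refine le_of_sq_le_sq ?_ (mul_nonneg (Real.sqrt_nonneg _) (euclNorm_nonneg z))
  rw [euclNorm_mulVec_sq, mul_pow, frob_sq, sum_mul]
  exact sum_le_sum fun i _ => ip_sq_le (A i) z

end Matrix

section InvNorm

variable {m n : ℕ} {A : Matrix (Fin m) (Fin n) ℝ}

lemma ker_mulVecLin_eq_bot (hrank : A.rank = n) : LinearMap.ker A.mulVecLin = ⊥ := by
  have h := A.mulVecLin.finrank_range_add_finrank_ker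
  rw [← Matrix.rank, hrank, Module.finrank_fin_fun] at h
  exact Submodule.finrank_eq_zero.mp (by omega)

lemma exists_euclNorm_le_mul_euclNorm_mulVec (hrank : A.rank = n) :
    ∃ K : ℝ, ∀ z, euclNorm z ≤ K * euclNorm (A.mulVec z) := by
  let T := (WithLp.linearEquiv 2 ℝ (Fin m → ℝ)).symm.toLinearMap ∘ₗ A.mulVecLin ∘ₗ
    (WithLp.linearEquiv 2 ℝ (Fin n → ℝ)).toLinearMap
  have hT : LinearMap.ker T = ⊥ := by
    simp [T, LinearMap.ker_comp, ker_mulVecLin_eq_bot hrank]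
  obtain ⟨K, -, hK⟩ := T.exists_antilipschitzWith hT
  refine ⟨K, fun z => ?_⟩
  simpa [euclNorm_eq_norm, T] using ZeroHomClass.bound_of_antilipschitz T hK (WithLp.toLp 2 z)

lemma euclNorm_le_invNorm_mul (hrank : A.rank = n) (z : Fin n → ℝ) :
    euclNorm z ≤ invNorm A * euclNorm (A.mulVec z) := by
  rcases Nat.eq_zero_or_pos n with rfl | hn
  · simp [Subsingleton.elim z 0, euclNorm]
  obtain ⟨K, hK⟩ := exists_euclNorm_le_mul_euclNorm_mulVec hrank
  have hbdd : BddBelow {M : ℝ | ∀ z, euclNorm z ≤ M * euclNorm (A.mulVec z)} := by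
    refine ⟨0, fun M hM => ?_⟩
    have h := hM (Pi.single ⟨0, hn⟩ 1)
    rw [euclNorm_single] at h
    exact (pos_of_mul_pos_left (one_pos.trans_le h) (euclNorm_nonneg _)).le
  have hclosed : IsClosed {M : ℝ | ∀ z, euclNorm z ≤ M * euclNorm (A.mulVec z)} := by
    simp only [Set.ofPred_forall]
    exact isClosed_iInter fun z => isClosed_le continuous_const (by fun_prop)
  exact hclosed.csInf_mem ⟨K, hK⟩ hbdd z

lemma one_le_invNorm_mul_frob (hrank : A.rank = n) (hn : 0 < n) : 1 ≤ invNorm A * frob A := by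
  have h := euclNorm_le_invNorm_mul hrank (Pi.single ⟨0, hn⟩ 1)
  rw [euclNorm_single] at h
  have hI : 0 ≤ invNorm A := (pos_of_mul_pos_left (one_pos.trans_le h) (euclNorm_nonneg _)).le
  have := euclNorm_mulVec_le A (Pi.single ⟨0, hn⟩ 1)
  rw [euclNorm_single, mul_one] at this
  exact h.trans (mul_le_mul_of_nonneg_left this hI)

end InvNorm

section IndexSequences

variable {α : Type*} [Fintype α] (p : α → ℝ)

lemma sum_prod_mul_fin_succ {k : ℕ} (F : (Fin (k + 1) → α) → ℝ) :
    ∑ f : Fin (k + 1) → α, (∏ j, p (f j)) * F f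
      = ∑ i, p i * ∑ g : Fin k → α, (∏ j, p (g j)) * F (Fin.cons i g) := by
  rw [← (Fin.consEquiv fun _ => α).sum_comp, Fintype.sum_prod_type]
  simp only [Fin.prod_univ_succ, mul_sum, mul_assoc]
  rfl

variable {p}

lemma sum_prod_eq_one (hp : ∑ i, p i = 1) (k : ℕ) : ∑ f : Fin k → α, ∏ j, p (f j) = 1 := by
  rw [← Fintype.prod_sum (fun (_ : Fin k) => p), hp, prod_const_one]

/-- Since `c D + d ≤ D`, the level `D` dominates the accumulated drift `d (1 + c + ⋯ + c^(k-1))`. -/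
lemma sum_prod_mul_iterate_le (hp0 : ∀ i, 0 ≤ p i) (hp : ∑ i, p i = 1) {V : Type*}
    (T : α → V → V) (X : List α → V) (hX : ∀ i l, X (i :: l) = T i (X l)) (Φ : V → ℝ)
    {c d D : ℝ} (hc : 0 ≤ c) (hD0 : 0 ≤ D) (hD : c * D + d ≤ D)
    (hstep : ∀ v, ∑ i, p i * Φ (T i v) ≤ c * Φ v + d) (k : ℕ) :
    ∑ f : Fin k → α, (∏ j, p (f j)) * Φ (X (List.ofFn f)) ≤ c ^ k * Φ (X []) + D := by
  induction k with
  | zero => simp [hD0]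
  | succ k ih =>
    have hw : ∀ g : Fin k → α, 0 ≤ ∏ j, p (g j) := fun g => prod_nonneg fun j _ => hp0 (g j)
    calc ∑ f : Fin (k + 1) → α, (∏ j, p (f j)) * Φ (X (List.ofFn f))
        = ∑ g : Fin k → α, (∏ j, p (g j)) * ∑ i, p i * Φ (T i (X (List.ofFn g))) := by
          simp only [sum_prod_mul_fin_succ, List.ofFn_succ, Fin.cons_zero, Fin.cons_succ, hX,
            mul_sum]
          rw [sum_comm]
          exact sum_congr rfl fun g _ => sum_congr rfl fun i _ => by ring
      _ ≤ ∑ g : Fin k → α, (∏ j, p (g j)) * (c * Φ (X (List.ofFn g)) + d) :=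
          sum_le_sum fun g _ => mul_le_mul_of_nonneg_left (hstep _) (hw g)
      _ = c * ∑ g : Fin k → α, (∏ j, p (g j)) * Φ (X (List.ofFn g))
            + d * ∑ g : Fin k → α, ∏ j, p (g j) := by
          rw [mul_sum, mul_sum, ← sum_add_distrib]
          exact sum_congr rfl fun g _ => by ring
      _ = c * ∑ g : Fin k → α, (∏ j, p (g j)) * Φ (X (List.ofFn g)) + d := by
          rw [sum_prod_eq_one hp, mul_one]
      _ ≤ c * (c ^ k * Φ (X []) + D) + d := by gcongr
      _ ≤ c ^ (k + 1) * Φ (X []) + D := by rw [pow_succ]; linarith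

lemma sum_mul_le_sqrt_sum_mul_sq {ι : Type*} [Fintype ι] {w e : ι → ℝ} (hw0 : ∀ i, 0 ≤ w i)
    (hw : ∑ i, w i = 1) :
    ∑ i, w i * e i ≤ √(∑ i, w i * e i ^ 2) := by
  refine Real.le_sqrt_of_sq_le ?_
  simpa [hw] using sum_sq_le_sum_mul_sum_of_sq_le_mul univ (fun i _ => hw0 i)
    (fun i _ => mul_nonneg (hw0 i) (sq_nonneg (e i)))
    (fun i _ => (by ring : (w i * e i) ^ 2 = w i * (w i * e i ^ 2)).le)

end IndexSequences

section Kaczmarz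

variable {m n : ℕ} (A : Matrix (Fin m) (Fin n) ℝ)

noncomputable def rowProb (i : Fin m) : ℝ := euclNorm (A i) ^ 2 / frob A ^ 2

noncomputable def kStep (c : Fin m → ℝ) (i : Fin m) (z : Fin n → ℝ) : Fin n → ℝ :=
  z + ((c i - ip (A i) z) / euclNorm (A i) ^ 2) • A i

noncomputable def scaledCond : ℝ := invNorm A ^ 2 * frob A ^ 2

noncomputable def noiseLevel (r : Fin m → ℝ) : ℝ := ⨆ i, |r i| / euclNorm (A i)

lemma kIter_cons (c : Fin m → ℝ) (x0 : Fin n → ℝ) (i : Fin m) (l : List (Fin m)) :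
    kIter A c x0 (i :: l) = kStep A c i (kIter A c x0 l) := rfl

lemma rowProb_nonneg (i : Fin m) : 0 ≤ rowProb A i := by
  unfold rowProb; positivity

lemma sum_rowProb (hF : frob A ≠ 0) : ∑ i, rowProb A i = 1 := by
  simp only [rowProb]
  rw [← sum_div, ← frob_sq, div_self (pow_ne_zero 2 hF)]

lemma noiseLevel_nonneg (r : Fin m → ℝ) : 0 ≤ noiseLevel A r :=
  Real.iSup_nonneg fun _ => div_nonneg (abs_nonneg _) (euclNorm_nonneg _)

variable {A}

lemma sum_sq_div_frob_sq_le (hrows : ∀ i, A i ≠ 0) (r : Fin m → ℝ) :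
    (∑ i, r i ^ 2) / frob A ^ 2 ≤ noiseLevel A r ^ 2 := by
  refine div_le_of_le_mul₀ (sq_nonneg _) (sq_nonneg _) ?_
  rw [frob_sq, mul_sum]
  refine sum_le_sum fun i _ => ?_
  have hle : |r i| / euclNorm (A i) ≤ noiseLevel A r :=
    le_ciSup (f := fun i => |r i| / euclNorm (A i)) (Set.finite_range _).bddAbove i
  rw [div_le_iff₀ (euclNorm_pos (hrows i))] at hle
  rw [← mul_pow, ← sq_abs]
  exact pow_le_pow_left₀ (abs_nonneg _) hle 2

lemma euclNorm_sq_div_scaledCond_le (hrank : A.rank = n) (z : Fin n → ℝ) :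
    euclNorm z ^ 2 / scaledCond A ≤ euclNorm (A.mulVec z) ^ 2 / frob A ^ 2 := by
  rw [scaledCond, ← div_div]
  refine div_le_div_of_nonneg_right ?_ (sq_nonneg _)
  refine div_le_of_le_mul₀ (sq_nonneg _) (sq_nonneg _) ?_
  rw [mul_comm, ← mul_pow]
  exact pow_le_pow_left₀ (euclNorm_nonneg _) (euclNorm_le_invNorm_mul hrank z) 2

variable {x : Fin n → ℝ} {b : Fin m → ℝ}

lemma sum_rowProb_mul_euclNorm_kStep_sub_sq (hrows : ∀ i, A i ≠ 0) (hF : frob A ≠ 0)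
    (hb : ∀ i, ip (A i) x = b i) (r : Fin m → ℝ) (z : Fin n → ℝ) :
    ∑ i, rowProb A i * euclNorm (kStep A (fun i => b i + r i) i z - x) ^ 2
      = euclNorm (z - x) ^ 2
          + ((∑ i, r i ^ 2) - euclNorm (A.mulVec (z - x)) ^ 2) / frob A ^ 2 := by
  have hterm : ∀ i, rowProb A i * euclNorm (kStep A (fun i => b i + r i) i z - x) ^ 2
      = rowProb A i * euclNorm (z - x) ^ 2 + (r i ^ 2 - ip (A i) (z - x) ^ 2) / frob A ^ 2 := by
    intro i
    have hi : euclNorm (A i) ≠ 0 := (euclNorm_pos (hrows i)).ne'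
    rw [kStep, ← hb i, euclNorm_add_proj_sub_sq, rowProb]
    field_simp
  rw [sum_congr rfl fun i _ => hterm i, sum_add_distrib, ← sum_mul, sum_rowProb A hF, one_mul,
    ← sum_div, sum_sub_distrib, euclNorm_mulVec_sq]

lemma sum_rowProb_mul_euclNorm_kStep_sub_sq_le (hrank : A.rank = n) (hrows : ∀ i, A i ≠ 0)
    (hF : frob A ≠ 0) (hb : ∀ i, ip (A i) x = b i) (r : Fin m → ℝ) (z : Fin n → ℝ) :
    ∑ i, rowProb A i * euclNorm (kStep A (fun i => b i + r i) i z - x) ^ 2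
      ≤ (1 - 1 / scaledCond A) * euclNorm (z - x) ^ 2 + noiseLevel A r ^ 2 := by
  rw [sum_rowProb_mul_euclNorm_kStep_sub_sq hrows hF hb, sub_div]
  have hA := euclNorm_sq_div_scaledCond_le hrank (z - x)
  have hr := sum_sq_div_frob_sq_le hrows r
  have : (1 - 1 / scaledCond A) * euclNorm (z - x) ^ 2
      = euclNorm (z - x) ^ 2 - euclNorm (z - x) ^ 2 / scaledCond A := by ring
  linarith

end Kaczmarz

lemma sqrt_mul_sq_add_mul_sq_le {a b u v : ℝ} (ha : 0 ≤ a) (hb : 0 ≤ b) (hu : 0 ≤ u)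
    (hv : 0 ≤ v) : √(a * u ^ 2 + b * v ^ 2) ≤ √a * u + √b * v := by
  refine Real.sqrt_le_iff.mpr ⟨by positivity, ?_⟩
  have hab : 0 ≤ √a * u * (√b * v) := by positivity
  nlinarith [Real.sq_sqrt ha, Real.sq_sqrt hb]

/-- Noisy randomized Kaczmarz: expected error after `k` steps. The expectation is the
sum over all index sequences of length `k`, each weighted by `∏ ‖a_{i_j}‖²/‖A‖_F²`. -/
theorem stmt_8 (m n : ℕ) (A : Matrix (Fin m) (Fin n) ℝ) (hrank : A.rank = n)
    (hrows : ∀ i, A i ≠ 0) (x x0 : Fin n → ℝ) (b r : Fin m → ℝ)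
    (hb : ∀ i, ip (A i) x = b i) (k : ℕ) :
    ∑ f : Fin k → Fin m, (∏ j, euclNorm (A (f j)) ^ 2 / frob A ^ 2) *
        euclNorm (kIter A (fun i => b i + r i) x0 (List.ofFn f) - x) ≤
      Real.sqrt ((1 - 1 / (invNorm A ^ 2 * frob A ^ 2)) ^ k) * euclNorm (x0 - x) +
        Real.sqrt (invNorm A ^ 2 * frob A ^ 2) * (⨆ i, |r i| / euclNorm (A i)) := by
  rcases Nat.eq_zero_or_pos n with rfl | hn
  · rw [sum_eq_zero fun f _ => by rw [euclNorm_of_fin_zero, mul_zero]]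
    exact add_nonneg (mul_nonneg (Real.sqrt_nonneg _) (euclNorm_nonneg _))
      (mul_nonneg (Real.sqrt_nonneg _) (noiseLevel_nonneg A r))
  have hIF := one_le_invNorm_mul_frob hrank hn
  have hF : frob A ≠ 0 := fun h => by rw [h, mul_zero] at hIF; linarith
  have hR : 1 ≤ scaledCond A := by rw [scaledCond, ← mul_pow]; exact one_le_pow₀ hIF
  have hc : 0 ≤ 1 - 1 / scaledCond A := sub_nonneg.mpr ((div_le_one (by linarith)).mpr hR)
  have second_moment := sum_prod_mul_iterate_le (rowProb_nonneg A) (sum_rowProb A hF)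
    (kStep A fun i => b i + r i) _ (kIter_cons A _ x0) (fun z => euclNorm (z - x) ^ 2) hc
    (by positivity : 0 ≤ scaledCond A * noiseLevel A r ^ 2)
    (le_of_eq (by field_simp; ring))
    (sum_rowProb_mul_euclNorm_kStep_sub_sq_le hrank hrows hF hb r) k
  calc _ ≤ √(∑ f : Fin k → Fin m, (∏ j, rowProb A (f j)) *
          euclNorm (kIter A (fun i => b i + r i) x0 (List.ofFn f) - x) ^ 2) :=
        sum_mul_le_sqrt_sum_mul_sq (fun f => prod_nonneg fun j _ => rowProb_nonneg A (f j))
          (sum_prod_eq_one (sum_rowProb A hF) k)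
    _ ≤ √((1 - 1 / scaledCond A) ^ k * euclNorm (x0 - x) ^ 2
          + scaledCond A * noiseLevel A r ^ 2) := Real.sqrt_le_sqrt second_moment
    _ ≤ _ := sqrt_mul_sq_add_mul_sq_le (pow_nonneg hc k) (by linarith) (euclNorm_nonneg _)
          (noiseLevel_nonneg A r)
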